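/- arXiv:1806.07982 — 3 statements merged into one kernel-verified Lean document; each statement's English description precedes it below -/
import Mathlib

section
/- Let f be holomorphic on the unit disk 𝔻 = {z ∈ ℂ : |z| < 1} with f'(z) ≠ 0 for all z ∈ 𝔻. If for every z ∈ 𝔻 one has Re(1 + z·f''(z)/f'(z)) ≥ (1/4)(1 − |z|²)·(2|Sf(z)| + |f''(z)/f'(z)|²), then f is injective on 𝔻 and f(𝔻) is a convex set. -/
/-!
Write `p z = 1 + z f''(z) / f'(z)`. The right-hand side of the hypothesis is nonnegative, so
`Re p ≥ 0` on the disk, and `p 0 = 1`; by the minimum principle `Re p > 0` throughout.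

Fix `0 < r < 1`. The tangent `G θ = f'(z) · i z` of the image curve `θ ↦ f z`, `z = r e^{iθ}`,
satisfies `G' = G · i p(z)`, so `G θ = G 0 · exp (i ∫₀^θ p)`: the tangent angle increases with
speed `Re p > 0`, and by the mean value property it turns by exactly `2π` per period. Such a
closed curve is simple and lies on one side of each of its tangent lines, so none of its points
is interior to its closed convex hull `K`. The maximum principle gives `f(closedBall 0 r) ⊆ K`,
the open mapping theorem makes `f(ball 0 r)` open, and since `interior K` is connected it equals
`f(ball 0 r)`. Exhausting the unit disk by these disks gives injectivity and convexity.
-/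

open Complex Metric Set

/-- The Schwarzian derivative `Sf = (f''/f')' - (1/2)(f''/f')²`. -/
noncomputable def schwarzian (f : ℂ → ℂ) (z : ℂ) : ℂ :=
  deriv (fun w => deriv (deriv f) w / deriv f w) z -
    (1 / 2) * (deriv (deriv f) z / deriv f z) ^ 2

open Real

theorem notMem_interior_closure_convexHull_of_forall_le {E : Type*} [AddCommGroup E]
    [TopologicalSpace E] [Module ℝ E] [ContinuousAdd E] [ContinuousSMul ℝ E] {s : Set E} {x : E}
    {l : E →L[ℝ] ℝ} (hl : l ≠ 0) (hs : ∀ y ∈ s, l x ≤ l y) :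
    x ∉ interior (closure (convexHull ℝ s)) := by
  have hsub : closure (convexHull ℝ s) ⊆ l ⁻¹' Ici (l x) :=
    closure_minimal (convexHull_min hs ((convex_Ici _).linear_preimage l.toLinearMap))
      (isClosed_Ici.preimage l.continuous)
  intro hx
  have himage : l '' interior (closure (convexHull ℝ s)) ⊆ Ioi (l x) := by
    rw [← interior_Ici]
    exact interior_maximal (image_subset_iff.2 (interior_subset.trans hsub))
      (l.isOpenMap_of_ne_zero hl _ isOpen_interior)
  exact lt_irrefl (l x) (himage (mem_image_of_mem l hx))

theorem image_closure_subset_closure_convexHull_image_frontier {E F : Type*}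
    [NormedAddCommGroup E] [NormedSpace ℂ E] [Nontrivial E] [NormedAddCommGroup F] [NormedSpace ℂ F]
    {U : Set E} {f : E → F} (hU : Bornology.IsBounded U) (hf : DiffContOnCl ℂ f U) :
    f '' closure U ⊆ closure (convexHull ℝ (f '' frontier U)) := by
  rintro _ ⟨z, hz, rfl⟩
  by_contra hnot
  obtain ⟨l, c, hlK, hlz⟩ := RCLike.geometric_hahn_banach_closed_point (𝕜 := ℂ)
    (convex_convexHull ℝ _).closure isClosed_closure hnot
  have hexp : DiffContOnCl ℂ (fun w => exp (l (f w))) U :=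
    differentiable_exp.comp_diffContOnCl (l.differentiable.comp_diffContOnCl hf)
  have hfront : ∀ w ∈ frontier U, ‖exp (l (f w))‖ ≤ Real.exp c := fun w hw => by
    rw [norm_exp]
    exact Real.exp_le_exp.2 (hlK _ (subset_closure (subset_convexHull ℝ _ ⟨w, hw, rfl⟩))).le
  have hmax := Complex.norm_le_of_forall_mem_frontier_norm_le hU hexp hfront hz
  rw [norm_exp, Real.exp_le_exp] at hmax
  exact hlz.not_ge hmax

theorem image_eq_interior_closure_convexHull_image_frontier {E F : Type*}
    [NormedAddCommGroup E] [NormedSpace ℂ E] [Nontrivial E] [ProperSpace E]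
    [NormedAddCommGroup F] [NormedSpace ℂ F] {U : Set E} {f : E → F}
    (hU : Bornology.IsBounded U) (hUo : IsOpen U) (hU₀ : U.Nonempty) (hf : DiffContOnCl ℂ f U)
    (hfU : IsOpen (f '' U))
    (hfrontier : ∀ z ∈ frontier U, f z ∉ interior (closure (convexHull ℝ (f '' frontier U)))) :
    f '' U = interior (closure (convexHull ℝ (f '' frontier U))) := by
  set K := closure (convexHull ℝ (f '' frontier U))
  have hsub : f '' closure U ⊆ K := image_closure_subset_closure_convexHull_image_frontier hU hf
  have hfU_sub : f '' U ⊆ interior K :=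
    hfU.subset_interior_iff.2 ((image_mono subset_closure).trans hsub)
  refine hfU_sub.antisymm <| ((convex_convexHull ℝ _).closure.interior.isPreconnected
    ).subset_of_closure_inter_subset hfU ?_ ?_
  · obtain ⟨z, hz⟩ := hU₀
    exact ⟨f z, hfU_sub ⟨z, hz, rfl⟩, z, hz, rfl⟩
  · rintro _ ⟨hcl, hint⟩
    have hclosed : IsClosed (f '' closure U) :=
      (hU.isCompact_closure.image_of_continuousOn hf.continuousOn).isClosed
    obtain ⟨z, hz, rfl⟩ := closure_minimal (image_mono subset_closure) hclosed hcl
    refine ⟨z, ?_, rfl⟩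
    rw [← hUo.interior_eq, ← closure_sdiff_frontier]
    exact ⟨hz, fun hzf => hfrontier z hzf hint⟩

theorem re_pos_of_re_nonneg {E : Type*} [NormedAddCommGroup E] [NormedSpace ℂ E] {p : E → ℂ}
    {U : Set E} (hU : IsPreconnected U) (hUo : IsOpen U) (hp : DifferentiableOn ℂ p U)
    (hnonneg : ∀ z ∈ U, 0 ≤ (p z).re) {z₀ : E} (hz₀ : z₀ ∈ U) (hpos : 0 < (p z₀).re) :
    ∀ z ∈ U, 0 < (p z).re := by
  intro z hz
  refine (hnonneg z hz).lt_of_ne fun hzero => hpos.ne' ?_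
  -- `‖exp (-p)‖ = exp (-Re p)` attains its maximum `1` at `z`
  have hmax : IsMaxOn (norm ∘ fun w => exp (-p w)) U z := fun w hw => by
    simp only [mem_ofPred_eq, Function.comp_apply, norm_exp, neg_re, ← hzero, neg_zero,
      Real.exp_le_exp, Left.neg_nonpos_iff, hnonneg w hw]
  have hconst := eqOn_of_isPreconnected_of_isMaxOn_norm hU hUo hp.neg.cexp hz hmax hz₀
  simpa [norm_exp, ← hzero] using congrArg (fun w => ‖w‖) hconst

theorem isOpen_image_of_deriv_ne_zero {f : ℂ → ℂ} {U : Set ℂ} (hU : IsOpen U)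
    (hf : DifferentiableOn ℂ f U) (hf' : ∀ z ∈ U, deriv f z ≠ 0) : IsOpen (f '' U) := by
  rw [isOpen_iff_mem_nhds]
  rintro _ ⟨z, hz, rfl⟩
  rw [← ((hf.analyticOnNhd hU) z hz).hasStrictDerivAt.map_nhds_eq (hf' z hz)]
  exact Filter.image_mem_map (hU.mem_nhds hz)

theorem eq_mul_exp_integral_of_hasDerivAt {G h : ℝ → ℂ} (hh : Continuous h)
    (hG : ∀ θ, HasDerivAt G (G θ * h θ) θ) (a θ : ℝ) :
    G θ = G a * exp (∫ t in a..θ, h t) := by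
  have hprim : ∀ θ, HasDerivAt (fun θ => ∫ t in a..θ, h t) (h θ) θ := fun θ =>
    (hh.integral_hasStrictDerivAt a θ).hasDerivAt
  have hderiv : ∀ θ, HasDerivAt (fun θ => G θ * exp (-∫ t in a..θ, h t)) 0 θ := fun θ => by
    have hprod := (hG θ).mul (hprim θ).neg.cexp
    rwa [show ∀ u v w : ℂ, u * v * w + u * (w * -v) = 0 from fun u v w => by ring] at hprod
  have hconst := is_const_of_deriv_eq_zero (fun θ => (hderiv θ).differentiableAt)
    (fun θ => (hderiv θ).deriv) θ a
  simp only [intervalIntegral.integral_same, neg_zero, Complex.exp_zero, mul_one] at hconst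
  rw [← hconst, mul_assoc, ← Complex.exp_add, neg_add_cancel, Complex.exp_zero, mul_one]

structure StrictlyConvexLoop (γ : ℝ → ℂ) (ψ ρ : ℝ → ℝ) : Prop where
  periodic : Function.Periodic γ (2 * π)
  hasDerivAt : ∀ θ, HasDerivAt γ (ρ θ * exp (ψ θ * I)) θ
  speed_pos : ∀ θ, 0 < ρ θ
  angle_strictMono : StrictMono ψ
  angle_continuous : Continuous ψ
  angle_add_two_pi : ∀ θ, ψ (θ + 2 * π) = ψ θ + 2 * π

/-- Signed distance of `γ t` from the tangent line of `γ` at `θ₀`, positive on its left. -/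
noncomputable def tangentOffset (γ : ℝ → ℂ) (ψ : ℝ → ℝ) (θ₀ t : ℝ) : ℝ :=
  ((γ t - γ θ₀) * exp (-(ψ θ₀ * I))).im

theorem tangentOffset_self (γ : ℝ → ℂ) (ψ : ℝ → ℝ) (θ₀ : ℝ) : tangentOffset γ ψ θ₀ θ₀ = 0 := by
  simp [tangentOffset]

namespace StrictlyConvexLoop

variable {γ : ℝ → ℂ} {ψ ρ : ℝ → ℝ}

theorem hasDerivAt_tangentOffset (h : StrictlyConvexLoop γ ψ ρ) (θ₀ θ : ℝ) :
    HasDerivAt (tangentOffset γ ψ θ₀) (ρ θ * Real.sin (ψ θ - ψ θ₀)) θ := by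
  have hrot := ((h.hasDerivAt θ).sub_const (γ θ₀)).mul_const (exp (-(ψ θ₀ * I)))
  have hval : (ρ θ * exp (ψ θ * I) * exp (-(ψ θ₀ * I)) : ℂ).im = ρ θ * Real.sin (ψ θ - ψ θ₀) := by
    rw [mul_assoc, ← Complex.exp_add, ← sub_eq_add_neg, ← sub_mul, ← ofReal_sub,
      im_ofReal_mul, exp_ofReal_mul_I_im]
  have him := imCLM.hasFDerivAt.comp_hasDerivAt θ hrot
  rw [imCLM_apply, hval] at him
  exact him

theorem continuous_tangentOffset (h : StrictlyConvexLoop γ ψ ρ) (θ₀ : ℝ) :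
    Continuous (tangentOffset γ ψ θ₀) :=
  continuous_iff_continuousAt.2 fun θ => (h.hasDerivAt_tangentOffset θ₀ θ).continuousAt

theorem tangentOffset_nonneg_of_mem_Icc (h : StrictlyConvexLoop γ ψ ρ) {θ₀ θ : ℝ}
    (hθ : θ ∈ Icc θ₀ (θ₀ + 2 * π)) : 0 ≤ tangentOffset γ ψ θ₀ θ := by
  -- the offset increases until the tangent has turned by `π`, then decreases back to `0`
  obtain ⟨t, ht, hψt⟩ : ∃ t ∈ Icc θ₀ (θ₀ + 2 * π), ψ t = ψ θ₀ + π := by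
    refine intermediate_value_Icc (by linarith [pi_pos]) h.angle_continuous.continuousOn ?_
    rw [h.angle_add_two_pi]
    constructor <;> linarith [pi_pos]
  have hderiv := h.hasDerivAt_tangentOffset θ₀
  rcases le_total θ t with hθt | htθ
  · have hmono : MonotoneOn (tangentOffset γ ψ θ₀) (Icc θ₀ t) := by
      refine monotoneOn_of_deriv_nonneg (convex_Icc _ _)
        (h.continuous_tangentOffset θ₀).continuousOn (fun x _ => (hderiv x).differentiableAt.differentiableWithinAt) fun x hx => ?_
      rw [interior_Icc] at hx
      rw [(hderiv x).deriv]
      have := h.angle_strictMono.monotone hx.1.le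
      have := h.angle_strictMono.monotone hx.2.le
      exact mul_nonneg (h.speed_pos x).le
        (sin_nonneg_of_nonneg_of_le_pi (by linarith) (by linarith))
    simpa [tangentOffset_self] using hmono (left_mem_Icc.2 ht.1) ⟨hθ.1, hθt⟩ hθ.1
  · have hanti : AntitoneOn (tangentOffset γ ψ θ₀) (Icc t (θ₀ + 2 * π)) := by
      refine antitoneOn_of_deriv_nonpos (convex_Icc _ _)
        (h.continuous_tangentOffset θ₀).continuousOn (fun x _ => (hderiv x).differentiableAt.differentiableWithinAt) fun x hx => ?_
      rw [interior_Icc] at hx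
      rw [(hderiv x).deriv, ← Real.sin_sub_two_pi]
      have := h.angle_strictMono.monotone hx.1.le
      have := h.angle_strictMono.monotone hx.2.le
      rw [h.angle_add_two_pi] at this
      exact mul_nonpos_of_nonneg_of_nonpos (h.speed_pos x).le
        (sin_nonpos_of_nonpos_of_neg_pi_le (by linarith) (by linarith))
    have hend : tangentOffset γ ψ θ₀ (θ₀ + 2 * π) = 0 := by
      simp [tangentOffset, h.periodic θ₀]
    simpa [hend] using hanti ⟨htθ, hθ.2⟩ (right_mem_Icc.2 ht.2) hθ.2

theorem tangentOffset_nonneg (h : StrictlyConvexLoop γ ψ ρ) (θ₀ θ : ℝ) :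
    0 ≤ tangentOffset γ ψ θ₀ θ := by
  have h2π : (0 : ℝ) < 2 * π := by positivity
  have hmem := Ico_subset_Icc_self (toIcoMod_mem_Ico h2π θ₀ θ)
  have hγ : γ (toIcoMod h2π θ₀ θ) = γ θ := by
    rw [toIcoMod, h.periodic.sub_zsmul_eq]
  simpa [tangentOffset, hγ] using h.tangentOffset_nonneg_of_mem_Icc hmem

theorem tangentOffset_pos (h : StrictlyConvexLoop γ ψ ρ) {θ₀ θ : ℝ} (hlt : θ₀ < θ)
    (hψ : ψ θ ≤ ψ θ₀ + π) : 0 < tangentOffset γ ψ θ₀ θ := by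
  have hderiv := h.hasDerivAt_tangentOffset θ₀
  have hmono : StrictMonoOn (tangentOffset γ ψ θ₀) (Icc θ₀ θ) := by
    refine strictMonoOn_of_deriv_pos (convex_Icc _ _)
      (h.continuous_tangentOffset θ₀).continuousOn fun x hx => ?_
    rw [interior_Icc] at hx
    rw [(hderiv x).deriv]
    have := h.angle_strictMono hx.1
    have := h.angle_strictMono hx.2
    exact mul_pos (h.speed_pos x) (sin_pos_of_pos_of_lt_pi (by linarith) (by linarith))
  simpa [tangentOffset_self] using
    hmono (left_mem_Icc.2 hlt.le) (right_mem_Icc.2 hlt.le) hlt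

theorem apply_ne_of_lt_of_lt_add_two_pi (h : StrictlyConvexLoop γ ψ ρ) {θ₁ θ₂ : ℝ}
    (h₁₂ : θ₁ < θ₂) (h₂₁ : θ₂ < θ₁ + 2 * π) : γ θ₁ ≠ γ θ₂ := by
  -- along one of the two arcs from `γ θ₁` to `γ θ₂` the tangent turns by at most `π`
  intro heq
  rcases le_or_gt (ψ θ₂) (ψ θ₁ + π) with hψ | hψ
  · simpa [tangentOffset, heq] using h.tangentOffset_pos h₁₂ hψ
  · have hψ' : ψ (θ₁ + 2 * π) ≤ ψ θ₂ + π := by rw [h.angle_add_two_pi]; linarith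
    simpa [tangentOffset, h.periodic θ₁, heq] using h.tangentOffset_pos h₂₁ hψ'

theorem apply_notMem_interior (h : StrictlyConvexLoop γ ψ ρ) (θ₀ : ℝ) :
    γ θ₀ ∉ interior (closure (convexHull ℝ (range γ))) := by
  set l : ℂ →L[ℝ] ℝ := imCLM ∘L (exp (-(ψ θ₀ * I)) • ContinuousLinearMap.id ℝ ℂ)
  have hl : ∀ y, l y = (y * exp (-(ψ θ₀ * I))).im := fun y => by simp [l, mul_comm]
  refine notMem_interior_closure_convexHull_of_forall_le (l := l) (fun h0 => ?_) ?_
  · have h1 : l (I * exp (ψ θ₀ * I)) = 1 := by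
      rw [hl, mul_assoc, ← Complex.exp_add]
      simp
    simp [h0] at h1
  · rintro _ ⟨θ, rfl⟩
    simpa [hl, tangentOffset, sub_mul] using h.tangentOffset_nonneg θ₀ θ

theorem of_hasDerivAt {γ G q : ℝ → ℂ} (hγ : Function.Periodic γ (2 * π))
    (hγG : ∀ θ, HasDerivAt γ (G θ) θ) (hGq : ∀ θ, HasDerivAt G (G θ * (I * q θ)) θ)
    (hG₀ : G 0 ≠ 0) (hq : Continuous q) (hq_periodic : Function.Periodic q (2 * π))
    (hq_re : ∀ θ, 0 < (q θ).re) (hq_integral : ∫ t in 0..2 * π, q t = 2 * π) :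
    StrictlyConvexLoop γ (fun θ => arg (G 0) + (∫ t in 0..θ, q t).re)
      (fun θ => ‖G 0‖ * Real.exp (-(∫ t in 0..θ, q t).im)) := by
  set Q : ℝ → ℂ := fun θ => ∫ t in 0..θ, q t
  have hQ : ∀ θ, HasDerivAt Q (q θ) θ := fun θ => (hq.integral_hasStrictDerivAt 0 θ).hasDerivAt
  have hψ : ∀ θ, HasDerivAt (fun θ => arg (G 0) + (Q θ).re) (q θ).re θ := fun θ =>
    (reCLM.hasFDerivAt.comp_hasDerivAt θ (hQ θ)).const_add _
  refine ⟨hγ, fun θ => ?_, fun θ => mul_pos (norm_pos_iff.2 hG₀) (Real.exp_pos _),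
    strictMono_of_deriv_pos fun θ => (hψ θ).deriv ▸ hq_re θ,
    continuous_iff_continuousAt.2 fun θ => (hψ θ).continuousAt, fun θ => ?_⟩
  · have hG : G θ = G 0 * exp (I * Q θ) := by
      rw [eq_mul_exp_integral_of_hasDerivAt (h := fun t => I * q t) (by fun_prop) hGq 0 θ,
        intervalIntegral.integral_const_mul]
    refine (hγG θ).congr_deriv ?_
    conv_lhs => rw [hG, ← norm_mul_exp_arg_mul_I (G 0), mul_assoc, ← Complex.exp_add]
    push_cast
    rw [mul_assoc, ← Complex.exp_add]
    congr 2
    apply Complex.ext <;> simp [Q]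
  · have hadd : Q (θ + 2 * π) = Q θ + 2 * π := by
      simp only [Q]
      rw [hq_periodic.intervalIntegral_add_eq_add 0 θ fun _ _ => hq.intervalIntegrable _ _,
        zero_add, hq_integral]
    show arg (G 0) + (Q (θ + 2 * π)).re = arg (G 0) + (Q θ).re + 2 * π
    rw [hadd, add_re, add_assoc]
    norm_cast

section Circle

variable {g : ℂ → ℂ} {r : ℝ} {ψ ρ : ℝ → ℝ}

theorem notMem_interior_of_mem_sphere (h : StrictlyConvexLoop (g ∘ circleMap 0 r) ψ ρ)
    (hr : 0 ≤ r) {z : ℂ} (hz : z ∈ sphere 0 r) :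
    g z ∉ interior (closure (convexHull ℝ (g '' sphere 0 r))) := by
  rw [← abs_of_nonneg hr, ← range_circleMap] at hz ⊢
  obtain ⟨θ, rfl⟩ := hz
  rw [← range_comp]
  exact h.apply_notMem_interior θ

theorem injOn_sphere (h : StrictlyConvexLoop (g ∘ circleMap 0 r) ψ ρ) (hr : 0 ≤ r) :
    InjOn g (sphere 0 r) := by
  rw [← abs_of_nonneg hr, ← range_circleMap]
  rintro _ ⟨α, rfl⟩ _ ⟨β, rfl⟩ hαβ
  have h2π : (0 : ℝ) < 2 * π := by positivity
  have hβ : circleMap 0 r (toIcoMod h2π α β) = circleMap 0 r β := by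
    rw [toIcoMod, (periodic_circleMap 0 r).sub_zsmul_eq]
  obtain ⟨hαβ', hβα'⟩ := toIcoMod_mem_Ico h2π α β
  rcases hαβ'.eq_or_lt with heq | hlt
  · rw [← hβ, ← heq]
  · exact absurd (hαβ.trans (congrArg g hβ.symm)) (h.apply_ne_of_lt_of_lt_add_two_pi hlt hβα')

end Circle

end StrictlyConvexLoop

theorem hasDerivAt_deriv_circleMap_mul_I {f : ℂ → ℂ} {r θ : ℝ}
    (hdf : DifferentiableAt ℂ (deriv f) (circleMap 0 r θ)) (hf' : deriv f (circleMap 0 r θ) ≠ 0) :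
    HasDerivAt (fun t => deriv f (circleMap 0 r t) * (circleMap 0 r t * I))
      (deriv f (circleMap 0 r θ) * (circleMap 0 r θ * I) * (I * (1 + circleMap 0 r θ *
        (deriv (deriv f) (circleMap 0 r θ) / deriv f (circleMap 0 r θ))))) θ := by
  have hc := hasDerivAt_circleMap 0 r θ
  refine ((hdf.hasDerivAt.comp θ hc).mul (hc.mul_const I)).congr_deriv ?_
  simp only [Function.comp_apply]
  field_simp
  ring

theorem differentiableOn_one_add_mul_deriv_deriv_div_deriv {f : ℂ → ℂ} {U : Set ℂ}
    (hU : IsOpen U) (hf : DifferentiableOn ℂ f U) (hf' : ∀ z ∈ U, deriv f z ≠ 0) :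
    DifferentiableOn ℂ (fun z => 1 + z * (deriv (deriv f) z / deriv f z)) U := by
  have hdf : AnalyticOnNhd ℂ (deriv f) U := (hf.analyticOnNhd hU).deriv
  exact (differentiableOn_const 1).add
    (differentiableOn_id.mul (hdf.deriv.differentiableOn.div hdf.differentiableOn hf'))

theorem exists_strictlyConvexLoop_circleMap {f : ℂ → ℂ} (hf : DifferentiableOn ℂ f (ball 0 1))
    (hf' : ∀ z ∈ ball (0 : ℂ) 1, deriv f z ≠ 0)
    (hpos : ∀ z ∈ ball (0 : ℂ) 1, 0 < (1 + z * (deriv (deriv f) z / deriv f z)).re)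
    {r : ℝ} (hr₀ : 0 < r) (hr₁ : r < 1) :
    ∃ ψ ρ : ℝ → ℝ, StrictlyConvexLoop (f ∘ circleMap 0 r) ψ ρ := by
  have hmem : ∀ θ, circleMap 0 r θ ∈ ball (0 : ℂ) 1 := fun θ => by
    simpa [abs_of_pos hr₀] using hr₁
  have hdf : AnalyticOnNhd ℂ (deriv f) (ball 0 1) := (hf.analyticOnNhd isOpen_ball).deriv
  set p : ℂ → ℂ := fun z => 1 + z * (deriv (deriv f) z / deriv f z)
  have hp : DifferentiableOn ℂ p (ball 0 1) :=
    differentiableOn_one_add_mul_deriv_deriv_div_deriv isOpen_ball hf hf'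
  have hp_integral : ∫ t in 0..2 * π, p (circleMap 0 r t) = 2 * π := by
    have hmean := (hp.diffContOnCl_ball (closedBall_subset_ball (by rwa [abs_of_pos hr₀]))
      ).circleAverage
    rw [circleAverage_def, show p 0 = 1 by simp [p], inv_smul_eq_iff₀ (by positivity)] at hmean
    simpa using hmean
  exact ⟨_, _, StrictlyConvexLoop.of_hasDerivAt (fun θ => congrArg f (periodic_circleMap 0 r θ))
    (fun θ => (hf.differentiableAt (isOpen_ball.mem_nhds (hmem θ))).hasDerivAt.comp θ
      (hasDerivAt_circleMap 0 r θ))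
    (fun θ => hasDerivAt_deriv_circleMap_mul_I (hdf _ (hmem θ)).differentiableAt (hf' _ (hmem θ)))
    (mul_ne_zero (hf' _ (hmem 0)) (mul_ne_zero (circleMap_ne_center hr₀.ne') I_ne_zero))
    (hp.continuousOn.comp_continuous (continuous_circleMap 0 r) hmem)
    (fun θ => congrArg p (periodic_circleMap 0 r θ)) (fun θ => hpos _ (hmem θ)) hp_integral⟩

theorem image_ball_eq_interior_closure_convexHull_image_sphere {f : ℂ → ℂ}
    (hf : DifferentiableOn ℂ f (ball 0 1)) (hf' : ∀ z ∈ ball (0 : ℂ) 1, deriv f z ≠ 0)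
    {r : ℝ} (hr₀ : 0 < r) (hr₁ : r < 1) {ψ ρ : ℝ → ℝ}
    (hloop : StrictlyConvexLoop (f ∘ circleMap 0 r) ψ ρ) :
    f '' ball 0 r = interior (closure (convexHull ℝ (f '' sphere 0 r))) := by
  have hsub : ball (0 : ℂ) r ⊆ ball 0 1 := ball_subset_ball hr₁.le
  rw [← frontier_ball 0 hr₀.ne']
  refine image_eq_interior_closure_convexHull_image_frontier isBounded_ball isOpen_ball
    ⟨0, mem_ball_self hr₀⟩ (hf.diffContOnCl_ball (closedBall_subset_ball hr₁))
    (isOpen_image_of_deriv_ne_zero isOpen_ball (hf.mono hsub) fun z hz => hf' z (hsub hz)) ?_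
  rw [frontier_ball 0 hr₀.ne']
  exact fun z => hloop.notMem_interior_of_mem_sphere hr₀.le

theorem eq_of_mem_closedBall_of_mem_sphere {f : ℂ → ℂ} (hf : DifferentiableOn ℂ f (ball 0 1))
    (hf' : ∀ z ∈ ball (0 : ℂ) 1, deriv f z ≠ 0)
    (hpos : ∀ z ∈ ball (0 : ℂ) 1, 0 < (1 + z * (deriv (deriv f) z / deriv f z)).re)
    {r : ℝ} (hr₀ : 0 < r) (hr₁ : r < 1) {a b : ℂ} (ha : a ∈ closedBall 0 r)
    (hb : b ∈ sphere 0 r) (hab : f a = f b) : a = b := by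
  obtain ⟨ψ, ρ, hloop⟩ := exists_strictlyConvexLoop_circleMap hf hf' hpos hr₀ hr₁
  rcases (mem_closedBall.1 ha).lt_or_eq with ha_ball | ha_sphere
  · have hfa := image_ball_eq_interior_closure_convexHull_image_sphere hf hf' hr₀ hr₁ hloop ▸
      mem_image_of_mem f (mem_ball.2 ha_ball)
    exact absurd (hab ▸ hfa) (hloop.notMem_interior_of_mem_sphere hr₀.le hb)
  · exact hloop.injOn_sphere hr₀.le ha_sphere hb hab

theorem injOn_ball_of_re_pos {f : ℂ → ℂ} (hf : DifferentiableOn ℂ f (ball 0 1))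
    (hf' : ∀ z ∈ ball (0 : ℂ) 1, deriv f z ≠ 0)
    (hpos : ∀ z ∈ ball (0 : ℂ) 1, 0 < (1 + z * (deriv (deriv f) z / deriv f z)).re) :
    InjOn f (ball 0 1) := by
  intro a ha b hb hab
  wlog hab_norm : ‖a‖ ≤ ‖b‖ generalizing a b
  · exact (this hb ha hab.symm (le_of_not_ge hab_norm)).symm
  rcases (norm_nonneg b).eq_or_lt with hb₀ | hb₀
  · rw [← hb₀, norm_le_zero_iff] at hab_norm
    rw [hab_norm, norm_eq_zero.1 hb₀.symm]
  · exact eq_of_mem_closedBall_of_mem_sphere hf hf' hpos hb₀ (mem_ball_zero_iff.1 hb)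
      (mem_closedBall_zero_iff.2 hab_norm) (mem_sphere_zero_iff_norm.2 rfl) hab

theorem convex_image_ball_of_re_pos {f : ℂ → ℂ} (hf : DifferentiableOn ℂ f (ball 0 1))
    (hf' : ∀ z ∈ ball (0 : ℂ) 1, deriv f z ≠ 0)
    (hpos : ∀ z ∈ ball (0 : ℂ) 1, 0 < (1 + z * (deriv (deriv f) z / deriv f z)).re) :
    Convex ℝ (f '' ball 0 1) := by
  rintro _ ⟨x, hx, rfl⟩ _ ⟨y, hy, rfl⟩ α β hα hβ hαβ
  rw [mem_ball_zero_iff] at hx hy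
  obtain ⟨r, hxy_r, hr₁⟩ := exists_between (max_lt hx hy)
  have hr₀ : 0 < r := (norm_nonneg x).trans_lt ((le_max_left _ _).trans_lt hxy_r)
  obtain ⟨ψ, ρ, hloop⟩ := exists_strictlyConvexLoop_circleMap hf hf' hpos hr₀ hr₁
  have hconvex : Convex ℝ (f '' ball 0 r) := by
    rw [image_ball_eq_interior_closure_convexHull_image_sphere hf hf' hr₀ hr₁ hloop]
    exact (convex_convexHull ℝ _).closure.interior
  refine image_mono (ball_subset_ball hr₁.le) (hconvex ⟨x, ?_, rfl⟩ ⟨y, ?_, rfl⟩ hα hβ hαβ)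
  · exact mem_ball_zero_iff.2 ((le_max_left _ _).trans_lt hxy_r)
  · exact mem_ball_zero_iff.2 ((le_max_right _ _).trans_lt hxy_r)

/-- If `f` is holomorphic with nonvanishing derivative on the unit disk and
`Re(1 + z f''/f') ≥ (1/4)(1-|z|²)(2|Sf| + |f''/f'|²)` on the disk,
then `f` is injective on the disk and its image is convex. -/
theorem schwarzian_inequality_implies_convex_mapping
    (f : ℂ → ℂ)
    (hf : DifferentiableOn ℂ f (ball (0 : ℂ) 1))
    (hf' : ∀ z ∈ ball (0 : ℂ) 1, deriv f z ≠ 0)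
    (hineq : ∀ z ∈ ball (0 : ℂ) 1,
      (1 + z * (deriv (deriv f) z / deriv f z)).re ≥
        (1 / 4) * (1 - ‖z‖ ^ 2) *
          (2 * ‖schwarzian f z‖ +
            ‖deriv (deriv f) z / deriv f z‖ ^ 2)) :
    InjOn f (ball (0 : ℂ) 1) ∧ Convex ℝ (f '' ball (0 : ℂ) 1) := by
  have hnonneg : ∀ z ∈ ball (0 : ℂ) 1, 0 ≤ (1 + z * (deriv (deriv f) z / deriv f z)).re :=
    fun z hz => by
      have hz' : ‖z‖ ^ 2 ≤ 1 := pow_le_one₀ (norm_nonneg z) (mem_ball_zero_iff.1 hz).le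
      exact le_trans (by positivity [sub_nonneg.2 hz']) (hineq z hz)
  have hpos := re_pos_of_re_nonneg (convex_ball 0 1).isPreconnected isOpen_ball
    (differentiableOn_one_add_mul_deriv_deriv_div_deriv isOpen_ball hf hf') hnonneg
    (mem_ball_self one_pos) (by simp)
  exact ⟨injOn_ball_of_re_pos hf hf' hpos, convex_image_ball_of_re_pos hf hf' hpos⟩
end

section
/- Let f be holomorphic on the unit disk 𝔻 = {z ∈ ℂ : |z| < 1} with f'(z) ≠ 0 for all z ∈ 𝔻. If for every z ∈ 𝔻 one has (1 − |z|²)²·|Sf(z)| + 2·|p(z)|² ≤ 2, where p(z) = conj(z) − (1/2)(1 − |z|²)·f''(z)/f'(z), then f is injective on 𝔻 and f(𝔻) is a convex set. -/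
open Complex Metric Set

noncomputable def pFun (f : ℂ → ℂ) (z : ℂ) : ℂ :=
  (starRingEnd ℂ) z -
    (1 / 2) * ((1 - ‖z‖ ^ 2 : ℝ) : ℂ) * (deriv (deriv f) z / deriv f z)

open scoped Real

/-!
The Kim–Minda inequality forces `‖p‖ ≤ 1`, and since `z p(z) = |z|² - (1 - |z|²) z f''/f' / 2`
this gives Study's condition `Re (1 + z f''/f') > 0`. On a circle `z = r e^{iθ}`, `r < 1`, the
velocity of `θ ↦ f z` is `i z f'(z)`; the derivative of its argument is `Re (1 + z f''/f') > 0`,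
and by the mean value property the argument grows by exactly `2π` per turn. So the image curve
lies strictly behind each of its tangent lines, and the maximum principle applied to the
exponential of a rotation of `f - f z₀` extends this to the whole disc `‖z‖ ≤ r`. This separation yields
injectivity, and exhibits `f '' ball 0 r` as an open set supported at each frontier point, hence
convex.
-/

theorem Complex.re_one_add_mul_pos_of_norm_conj_sub_le_one {z w : ℂ} (hz : ‖z‖ < 1)
    (h : ‖(starRingEnd ℂ) z - (1 / 2) * ((1 - ‖z‖ ^ 2 : ℝ) : ℂ) * w‖ ≤ 1) :
    0 < (1 + z * w).re := by
  set p := (starRingEnd ℂ) z - (1 / 2) * ((1 - ‖z‖ ^ 2 : ℝ) : ℂ) * w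
  -- `z p = |z|² - (1 - |z|²) z w / 2`, and `Re (z p) ≤ |z|` since `|p| ≤ 1`
  have hzp : (1 - ‖z‖ ^ 2) * (z * w).re = 2 * ‖z‖ ^ 2 - 2 * (z * p).re := by
    have : ((1 - ‖z‖ ^ 2 : ℝ) : ℂ) * (z * w) =
        ((2 * ‖z‖ ^ 2 : ℝ) : ℂ) - ((2 : ℝ) : ℂ) * (z * p) := by
      have hzz : z * (starRingEnd ℂ) z = ((‖z‖ ^ 2 : ℝ) : ℂ) := by
        rw [mul_conj, normSq_eq_norm_sq]
      simp only [p]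
      push_cast at hzz ⊢
      linear_combination 2 * hzz
    simpa only [sub_re, re_ofReal_mul, ofReal_re] using congrArg re this
  have hre : (z * p).re ≤ ‖z‖ :=
    (re_le_norm _).trans (by rw [norm_mul]; exact mul_le_of_le_one_right (norm_nonneg z) h)
  have : (1 - ‖z‖) ^ 2 ≤ (1 - ‖z‖ ^ 2) * (1 + z * w).re := by
    rw [add_re, one_re, mul_add, mul_one, hzp]; nlinarith
  exact pos_of_mul_pos_right ((pow_pos (sub_pos.2 hz) 2).trans_le this)
    (sub_nonneg.2 (pow_le_one₀ (norm_nonneg z) hz.le))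

theorem eq_mul_exp_sub_of_hasDerivAt {h a A : ℝ → ℂ} (hh : ∀ t, HasDerivAt h (a t * h t) t)
    (hA : ∀ t, HasDerivAt A (a t) t) (s t : ℝ) : h t = h s * exp (A t - A s) := by
  have hu : ∀ t, HasDerivAt (fun t => h t * exp (-A t)) 0 t := fun t =>
    ((hh t).mul (hA t).neg.cexp).congr_deriv (by ring)
  have hconst := is_const_of_deriv_eq_zero (fun t => (hu t).differentiableAt)
    (fun t => (hu t).deriv) t s
  calc h t = h t * exp (-A t) * exp (A t) := by
        rw [mul_assoc, ← exp_add, neg_add_cancel, exp_zero, mul_one]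
    _ = h s * exp (A t - A s) := by rw [hconst, mul_assoc, ← exp_add, neg_add_eq_sub]

theorem isOpen_image_of_hasStrictDerivAt {𝕜 : Type*} [NontriviallyNormedField 𝕜] [CompleteSpace 𝕜]
    {f f' : 𝕜 → 𝕜} {U : Set 𝕜} (hU : IsOpen U) (hf : ∀ x ∈ U, HasStrictDerivAt f (f' x) x)
    (hf' : ∀ x ∈ U, f' x ≠ 0) : IsOpen (f '' U) := by
  refine isOpen_iff_mem_nhds.2 ?_
  rintro _ ⟨x, hx, rfl⟩
  rw [← (hf x hx).map_nhds_eq (hf' x hx)]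
  exact Filter.image_mem_map (hU.mem_nhds hx)

theorem Convex.of_isOpen_of_forall_mem_frontier {E : Type*} [TopologicalSpace E] [AddCommGroup E]
    [Module ℝ E] [ContinuousAdd E] [ContinuousSMul ℝ E] {S : Set E} (hS : IsOpen S)
    (h : ∀ y ∈ frontier S, ∃ ℓ : E →ₗ[ℝ] ℝ, ∀ x ∈ S, ℓ x < ℓ y) : Convex ℝ S := by
  refine convex_iff_segment_subset.2 fun x hx x' hx' => ?_
  -- a point of the segment in `closure S \ S` would lie strictly below its own level
  refine (convex_segment x x').isPreconnected.subset_of_closure_inter_subset hS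
    ⟨x, left_mem_segment ℝ x x', hx⟩ fun y ⟨hyS, hy⟩ => ?_
  by_contra hyS'
  obtain ⟨ℓ, hℓ⟩ := h y ⟨hyS, by rwa [hS.interior_eq]⟩
  obtain ⟨a, b, ha, hb, hab, rfl⟩ := hy
  have h₁ := hℓ x hx
  have h₂ := hℓ x' hx'
  simp only [map_add, map_smul, smul_eq_mul] at h₁ h₂
  obtain rfl : b = 1 - a := by linarith
  nlinarith [mul_nonneg (mul_nonneg ha hb) (sq_nonneg (ℓ x' - ℓ x))]

theorem Complex.re_neg_of_re_nonpos_on_sphere {g : ℂ → ℂ} {c z : ℂ} {r : ℝ}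
    (hg : DifferentiableOn ℂ g (closedBall c r)) (hsphere : ∀ w ∈ sphere c r, (g w).re ≤ 0)
    (hz : z ∈ ball c r) (hgz : deriv g z ≠ 0) : (g z).re < 0 := by
  have hr : r ≠ 0 := (pos_of_mem_ball hz).ne'
  -- maximum modulus principle for `exp ∘ g`, whose modulus is `exp (Re g)`
  have hG : DiffContOnCl ℂ (exp ∘ g) (ball c r) :=
    hg.cexp.diffContOnCl_ball subset_rfl
  have hle : ∀ w ∈ closedBall c r, ‖exp (g w)‖ ≤ 1 := fun w hw =>
    norm_le_of_forall_mem_frontier_norm_le isBounded_ball hG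
      (fun w hw => by
        rw [frontier_ball c hr] at hw
        simpa [norm_exp] using hsphere w hw)
      (by rwa [closure_ball c hr])
  have hle_z := hle z (ball_subset_closedBall hz)
  refine (Real.exp_le_one_iff.1 (by simpa [norm_exp] using hle_z)).lt_of_ne fun h0 => hgz ?_
  have hmax : IsMaxOn (norm ∘ exp ∘ g) (ball c r) z := fun w hw => by
    simpa [norm_exp, h0] using hle w (ball_subset_closedBall hw)
  have hconst := eqOn_of_isPreconnected_of_isMaxOn_norm (convex_ball c r).isPreconnected
    isOpen_ball (hg.cexp.mono ball_subset_closedBall) hz hmax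
  have hgd : HasDerivAt g (deriv g z) z := (hg.differentiableAt
    (Filter.mem_of_superset (isOpen_ball.mem_nhds hz) ball_subset_closedBall)).hasDerivAt
  have h := hgd.cexp.unique <| (hasDerivAt_const z (exp (g z))).congr_of_eventuallyEq
    (Filter.eventuallyEq_of_mem (isOpen_ball.mem_nhds hz) hconst)
  simpa [exp_ne_zero] using h

theorem frontier_image_ball_subset_image_sphere {X Y : Type*} [MetricSpace X] [ProperSpace X]
    [TopologicalSpace Y] [T2Space Y] {f : X → Y} {c : X} {r : ℝ}
    (hf : ContinuousOn f (closedBall c r)) (ho : IsOpen (f '' ball c r)) :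
    frontier (f '' ball c r) ⊆ f '' sphere c r := by
  rw [ho.frontier_eq]
  rintro y ⟨hy, hy'⟩
  obtain ⟨z, hz, rfl⟩ := closure_minimal (image_mono ball_subset_closedBall)
    ((isCompact_closedBall c r).image_of_continuousOn hf).isClosed hy
  exact ⟨z, (mem_closedBall.1 hz).eq_of_not_lt fun hlt => hy' ⟨z, hlt, rfl⟩, rfl⟩

-- `exp (T t * I)` is the outward normal of the curve `γ`; if it turns monotonically exactly once
-- per period, `γ` lies strictly behind each of its tangent lines.
theorem re_exp_neg_mul_sub_neg_of_strictMono {γ : ℝ → ℂ} {c T : ℝ → ℝ} {θ₀ θ : ℝ}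
    (hγ : ∀ t, HasDerivAt γ (c t * exp (T t * I) * I) t) (hc : ∀ t, 0 < c t)
    (hT : StrictMono T) (hTc : Continuous T) (hT₀ : T (θ₀ + 2 * π) = T θ₀ + 2 * π)
    (hγ₀ : γ (θ₀ + 2 * π) = γ θ₀) (hθ : θ ∈ Ioo θ₀ (θ₀ + 2 * π)) :
    (exp (-(T θ₀ * I)) * (γ θ - γ θ₀)).re < 0 := by
  set ψ : ℝ → ℝ := fun t => (exp (-(T θ₀ * I)) * (γ t - γ θ₀)).re
  have hψ : ∀ t, HasDerivAt ψ (-(c t * Real.sin (T t - T θ₀))) t := fun t => by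
    refine (reCLM.hasFDerivAt.comp_hasDerivAt t
      (((hγ t).sub_const (γ θ₀)).const_mul _)).congr_deriv ?_
    rw [show exp (-(T θ₀ * I)) * (c t * exp (T t * I) * I) = c t * exp ((T t - T θ₀ : ℝ) * I) * I by
      push_cast; rw [sub_mul, sub_eq_neg_add, exp_add]; ring]
    simp only [mul_re, mul_im, ofReal_re, ofReal_im, I_re, I_im, exp_ofReal_mul_I_re,
      exp_ofReal_mul_I_im, reCLM_apply]
    ring
  have hψc : Continuous ψ := continuous_iff_continuousAt.2 fun t => (hψ t).continuousAt
  -- `ψ` decreases while the normal turns through the first half-turn, then increases back to `0`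
  obtain ⟨m, hm, hTm⟩ : ∃ m ∈ Ioo θ₀ (θ₀ + 2 * π), T m = T θ₀ + π :=
    intermediate_value_Ioo (by linarith [Real.pi_pos]) hTc.continuousOn
      ⟨by linarith [Real.pi_pos], by linarith [Real.pi_pos]⟩
  have hanti : StrictAntiOn ψ (Icc θ₀ m) := by
    refine strictAntiOn_of_hasDerivWithinAt_neg (convex_Icc _ _) hψc.continuousOn
      (fun t _ => (hψ t).hasDerivWithinAt) fun t ht => ?_
    rw [interior_Icc] at ht
    have := hT ht.1
    have := hT ht.2
    exact neg_neg_of_pos (mul_pos (hc t) (Real.sin_pos_of_pos_of_lt_pi (by linarith) (by linarith)))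
  have hmono : StrictMonoOn ψ (Icc m (θ₀ + 2 * π)) := by
    refine strictMonoOn_of_hasDerivWithinAt_pos (convex_Icc _ _) hψc.continuousOn
      (fun t _ => (hψ t).hasDerivWithinAt) fun t ht => ?_
    rw [interior_Icc] at ht
    have := hT ht.1
    have := hT ht.2
    have := Real.sin_pos_of_pos_of_lt_pi (x := T t - T θ₀ - π) (by linarith) (by linarith)
    rw [Real.sin_sub_pi] at this
    nlinarith [hc t]
  have hψ₀ : ψ θ₀ = 0 := by simp [ψ]
  have hψ₂ : ψ (θ₀ + 2 * π) = 0 := by simp [ψ, hγ₀]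
  rcases le_or_gt θ m with hθm | hθm
  · exact hψ₀ ▸ hanti ⟨le_rfl, hm.1.le⟩ ⟨hθ.1.le, hθm⟩ hθ.1
  · exact hψ₂ ▸ hmono ⟨hθm.le, hθ.2.le⟩ ⟨hm.2.le, le_rfl⟩ hθ.2

noncomputable def convexityFunctional (f : ℂ → ℂ) (z : ℂ) : ℂ :=
  1 + z * (deriv (deriv f) z / deriv f z)

section UnitDisc

variable {f : ℂ → ℂ} {r : ℝ}

theorem analyticOnNhd_convexityFunctional (hf : DifferentiableOn ℂ f (ball 0 1))
    (hf' : ∀ z ∈ ball (0 : ℂ) 1, deriv f z ≠ 0) :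
    AnalyticOnNhd ℂ (convexityFunctional f) (ball 0 1) :=
  have hf₁ := (hf.analyticOnNhd isOpen_ball).deriv
  analyticOnNhd_const.add (analyticOnNhd_id.mul (hf₁.deriv.div hf₁ hf'))

theorem circleMap_mem_ball_zero_one (hr : |r| < 1) (θ : ℝ) : circleMap 0 r θ ∈ ball (0 : ℂ) 1 :=
  sphere_subset_ball hr (circleMap_mem_sphere' 0 r θ)

theorem continuous_convexityFunctional_circleMap (hf : DifferentiableOn ℂ f (ball 0 1))
    (hf' : ∀ z ∈ ball (0 : ℂ) 1, deriv f z ≠ 0) (hr : |r| < 1) :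
    Continuous fun θ => convexityFunctional f (circleMap 0 r θ) :=
  (analyticOnNhd_convexityFunctional hf hf').continuousOn.comp_continuous
    (continuous_circleMap 0 r) (circleMap_mem_ball_zero_one hr)

theorem integral_convexityFunctional_circleMap (hf : DifferentiableOn ℂ f (ball 0 1))
    (hf' : ∀ z ∈ ball (0 : ℂ) 1, deriv f z ≠ 0) (hr : |r| < 1) :
    ∫ θ in 0..2 * π, convexityFunctional f (circleMap 0 r θ) = 2 * π := by
  have hmean := DiffContOnCl.circleAverage (c := 0) (R := r)
    ((analyticOnNhd_convexityFunctional hf hf').differentiableOn.diffContOnCl_ball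
      (closedBall_subset_ball hr))
  rw [Real.circleAverage_def, convexityFunctional, zero_mul, add_zero,
    inv_smul_eq_iff₀ (by positivity)] at hmean
  simpa using hmean

noncomputable def circleTurning (f : ℂ → ℂ) (r θ : ℝ) : ℂ :=
  ∫ s in 0..θ, convexityFunctional f (circleMap 0 r s)

theorem hasDerivAt_circleTurning (hf : DifferentiableOn ℂ f (ball 0 1))
    (hf' : ∀ z ∈ ball (0 : ℂ) 1, deriv f z ≠ 0) (hr : |r| < 1) (θ : ℝ) :
    HasDerivAt (circleTurning f r) (convexityFunctional f (circleMap 0 r θ)) θ :=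
  ((continuous_convexityFunctional_circleMap hf hf' hr).integral_hasStrictDerivAt 0 θ).hasDerivAt

theorem circleTurning_add_two_pi (hf : DifferentiableOn ℂ f (ball 0 1))
    (hf' : ∀ z ∈ ball (0 : ℂ) 1, deriv f z ≠ 0) (hr : |r| < 1) (θ : ℝ) :
    circleTurning f r (θ + 2 * π) = circleTurning f r θ + 2 * π := by
  have hper : Function.Periodic (fun θ => convexityFunctional f (circleMap 0 r θ)) (2 * π) :=
    fun θ => by simp only [periodic_circleMap 0 r θ]
  rw [circleTurning, hper.intervalIntegral_add_eq_add 0 θ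
    (continuous_convexityFunctional_circleMap hf hf' hr).intervalIntegrable, zero_add,
    integral_convexityFunctional_circleMap hf hf' hr, circleTurning]

-- `h = z f'(z)` along the circle solves `h' = i q h`, with `q` the convexity functional
theorem circleMap_mul_deriv_eq (hf : DifferentiableOn ℂ f (ball 0 1))
    (hf' : ∀ z ∈ ball (0 : ℂ) 1, deriv f z ≠ 0) (hr : |r| < 1) (θ : ℝ) :
    circleMap 0 r θ * deriv f (circleMap 0 r θ) =
      r * deriv f r * exp (I * circleTurning f r θ) := by
  have hf₁ := (hf.analyticOnNhd isOpen_ball).deriv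
  have hh : ∀ t, HasDerivAt (fun θ => circleMap 0 r θ * deriv f (circleMap 0 r θ))
      (I * convexityFunctional f (circleMap 0 r t) * (circleMap 0 r t * deriv f (circleMap 0 r t)))
      t := fun t => by
    have hz := circleMap_mem_ball_zero_one hr t
    refine ((hasDerivAt_circleMap 0 r t).mul ((hf₁ _ hz).differentiableAt.hasDerivAt.comp t
      (hasDerivAt_circleMap 0 r t))).congr_deriv ?_
    simp only [convexityFunctional, Function.comp_apply]
    field_simp [hf' _ hz]
  rw [eq_mul_exp_sub_of_hasDerivAt hh (fun t => (hasDerivAt_circleTurning hf hf' hr t).const_mul I)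
    0 θ]
  simp [circleTurning, circleMap_zero]

theorem exists_hasDerivAt_comp_circleMap (hf : DifferentiableOn ℂ f (ball 0 1))
    (hf' : ∀ z ∈ ball (0 : ℂ) 1, deriv f z ≠ 0) (hr₀ : 0 < r) (hr₁ : r < 1) :
    ∃ c T : ℝ → ℝ,
      (∀ t, HasDerivAt (fun θ => f (circleMap 0 r θ)) (c t * exp (T t * I) * I) t) ∧
      (∀ t, 0 < c t) ∧ (∀ t, HasDerivAt T (convexityFunctional f (circleMap 0 r t)).re t) ∧
      ∀ t, T (t + 2 * π) = T t + 2 * π := by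
  have hr : |r| < 1 := by rwa [abs_of_pos hr₀]
  have hw : deriv f r ≠ 0 := hf' _ (by simpa [abs_of_pos hr₀] using hr)
  set Q := circleTurning f r
  refine ⟨fun t => r * ‖deriv f r‖ * Real.exp (-(Q t).im), fun t => arg (deriv f r) + (Q t).re,
    fun t => ?_, fun t => mul_pos (mul_pos hr₀ (norm_pos_iff.2 hw)) (Real.exp_pos _),
    fun t =>
      (reCLM.hasFDerivAt.comp_hasDerivAt t (hasDerivAt_circleTurning hf hf' hr t)).const_add _,
    fun t => by simp [Q, circleTurning_add_two_pi hf hf' hr]; ring⟩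
  have hz := circleMap_mem_ball_zero_one hr t
  refine ((hf.differentiableAt (isOpen_ball.mem_nhds hz)).hasDerivAt.comp t
    (hasDerivAt_circleMap 0 r t)).congr_deriv ?_
  have hIQ : I * Q t = ((-(Q t).im : ℝ) : ℂ) + ((Q t).re : ℝ) * I := by
    apply Complex.ext <;> simp
  rw [show deriv f (circleMap 0 r t) * (circleMap 0 r t * I) =
      I * (circleMap 0 r t * deriv f (circleMap 0 r t)) by ring,
    circleMap_mul_deriv_eq hf hf' hr, hIQ]
  conv_lhs => rw [← norm_mul_exp_arg_mul_I (deriv f r)]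
  push_cast
  simp only [add_mul, exp_add]
  ring

theorem exists_re_mul_sub_neg_of_mem_sphere (hf : DifferentiableOn ℂ f (ball 0 1))
    (hf' : ∀ z ∈ ball (0 : ℂ) 1, deriv f z ≠ 0)
    (hq : ∀ z ∈ ball (0 : ℂ) 1, 0 < (convexityFunctional f z).re) (hr₀ : 0 < r) (hr₁ : r < 1)
    {z₀ : ℂ} (hz₀ : z₀ ∈ sphere (0 : ℂ) r) :
    ∃ u : ℂ, u ≠ 0 ∧ ∀ w ∈ sphere (0 : ℂ) r, w ≠ z₀ → (u * (f w - f z₀)).re < 0 := by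
  have hr : |r| < 1 := by rwa [abs_of_pos hr₀]
  obtain ⟨c, T, hγ, hc, hT, hT₂⟩ := exists_hasDerivAt_comp_circleMap hf hf' hr₀ hr₁
  obtain ⟨θ₀, rfl⟩ : z₀ ∈ range (circleMap 0 r) := by rwa [range_circleMap, abs_of_pos hr₀]
  refine ⟨exp (-(T θ₀ * I)), exp_ne_zero _, fun w hw hne => ?_⟩
  obtain ⟨θ, hθ, rfl⟩ : w ∈ circleMap 0 r '' Ioc θ₀ (θ₀ + 2 * π) := by
    rwa [(periodic_circleMap 0 r).image_Ioc Real.two_pi_pos θ₀, range_circleMap, abs_of_pos hr₀]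
  have hθ₂ : θ ≠ θ₀ + 2 * π := by
    rintro rfl
    exact hne (periodic_circleMap 0 r θ₀)
  exact re_exp_neg_mul_sub_neg_of_strictMono hγ hc
    (strictMono_of_hasDerivAt_pos hT fun t => hq _ (circleMap_mem_ball_zero_one hr t))
    (continuous_iff_continuousAt.2 fun t => (hT t).continuousAt) (hT₂ θ₀)
    (congrArg f (periodic_circleMap 0 r θ₀)) ⟨hθ.1, hθ.2.lt_of_ne hθ₂⟩

theorem exists_re_mul_sub_neg_of_mem_closedBall (hf : DifferentiableOn ℂ f (ball 0 1))
    (hf' : ∀ z ∈ ball (0 : ℂ) 1, deriv f z ≠ 0)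
    (hq : ∀ z ∈ ball (0 : ℂ) 1, 0 < (convexityFunctional f z).re) (hr₀ : 0 < r) (hr₁ : r < 1)
    {z₀ : ℂ} (hz₀ : z₀ ∈ sphere (0 : ℂ) r) :
    ∃ u : ℂ, ∀ w ∈ closedBall (0 : ℂ) r, w ≠ z₀ → (u * (f w - f z₀)).re < 0 := by
  obtain ⟨u, hu, hsphere⟩ := exists_re_mul_sub_neg_of_mem_sphere hf hf' hq hr₀ hr₁ hz₀
  refine ⟨u, fun w hw hne => ?_⟩
  rcases (mem_closedBall.1 hw).lt_or_eq with hlt | heq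
  · have hfd : HasDerivAt f (deriv f w) w :=
      (hf.differentiableAt (isOpen_ball.mem_nhds (ball_subset_ball hr₁.le hlt))).hasDerivAt
    refine Complex.re_neg_of_re_nonpos_on_sphere (g := fun v => u * (f v - f z₀))
      (((hf.mono (closedBall_subset_ball hr₁)).sub_const (f z₀)).const_mul u)
      (fun v hv => ?_) hlt ?_
    · rcases eq_or_ne v z₀ with rfl | hv₀
      · simp
      · exact (hsphere v hv hv₀).le
    · rw [((hfd.sub_const (f z₀)).const_mul u).deriv]
      exact mul_ne_zero hu (hf' w (ball_subset_ball hr₁.le hlt))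
  · exact hsphere w heq hne

theorem convex_image_ball_of_re_convexityFunctional_pos (hf : DifferentiableOn ℂ f (ball 0 1))
    (hf' : ∀ z ∈ ball (0 : ℂ) 1, deriv f z ≠ 0)
    (hq : ∀ z ∈ ball (0 : ℂ) 1, 0 < (convexityFunctional f z).re) (hr₀ : 0 < r) (hr₁ : r < 1) :
    Convex ℝ (f '' ball 0 r) := by
  have hsub := ball_subset_ball (x := (0 : ℂ)) hr₁.le
  have hopen : IsOpen (f '' ball 0 r) := isOpen_image_of_hasStrictDerivAt isOpen_ball
    (fun z hz => (hf.analyticOnNhd isOpen_ball z (hsub hz)).hasStrictDerivAt)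
    (fun z hz => hf' z (hsub hz))
  refine Convex.of_isOpen_of_forall_mem_frontier hopen fun y hy => ?_
  obtain ⟨z₀, hz₀, rfl⟩ := frontier_image_ball_subset_image_sphere
    (hf.continuousOn.mono (closedBall_subset_ball hr₁)) hopen hy
  obtain ⟨u, hu⟩ := exists_re_mul_sub_neg_of_mem_closedBall hf hf' hq hr₀ hr₁ hz₀
  refine ⟨Complex.reLm.comp (LinearMap.mulLeft ℝ u), ?_⟩
  rintro _ ⟨w, hw, rfl⟩
  have hne : w ≠ z₀ := by
    rintro rfl
    exact (mem_sphere.1 hz₀).not_lt hw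
  simpa [mul_sub] using hu w (ball_subset_closedBall hw) hne

theorem convex_image_ball_one_of_re_convexityFunctional_pos
    (hf : DifferentiableOn ℂ f (ball 0 1)) (hf' : ∀ z ∈ ball (0 : ℂ) 1, deriv f z ≠ 0)
    (hq : ∀ z ∈ ball (0 : ℂ) 1, 0 < (convexityFunctional f z).re) :
    Convex ℝ (f '' ball 0 1) := by
  rintro _ ⟨z₁, hz₁, rfl⟩ _ ⟨z₂, hz₂, rfl⟩ a b ha hb hab
  obtain ⟨r, hr, hr₁⟩ := exists_between (max_lt (mem_ball_zero_iff.1 hz₁) (mem_ball_zero_iff.1 hz₂))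
  have hr₀ : 0 < r := (norm_nonneg z₁).trans_lt ((le_max_left _ _).trans_lt hr)
  refine image_mono (ball_subset_ball hr₁.le)
    (convex_image_ball_of_re_convexityFunctional_pos hf hf' hq hr₀ hr₁
      ⟨z₁, ?_, rfl⟩ ⟨z₂, ?_, rfl⟩ ha hb hab)
  · exact mem_ball_zero_iff.2 ((le_max_left _ _).trans_lt hr)
  · exact mem_ball_zero_iff.2 ((le_max_right _ _).trans_lt hr)

theorem injOn_of_re_convexityFunctional_pos (hf : DifferentiableOn ℂ f (ball 0 1))
    (hf' : ∀ z ∈ ball (0 : ℂ) 1, deriv f z ≠ 0)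
    (hq : ∀ z ∈ ball (0 : ℂ) 1, 0 < (convexityFunctional f z).re) :
    InjOn f (ball 0 1) := by
  intro z₁ hz₁ z₂ hz₂ h
  by_contra hne
  wlog hle : ‖z₁‖ ≤ ‖z₂‖ generalizing z₁ z₂
  · exact this hz₂ hz₁ h.symm (Ne.symm hne) (le_of_not_ge hle)
  have hr₀ : 0 < ‖z₂‖ := by
    refine (norm_nonneg z₂).lt_of_ne fun h₀ => hne ?_
    rw [norm_eq_zero.1 h₀.symm, ← norm_eq_zero]
    exact le_antisymm (h₀ ▸ hle) (norm_nonneg z₁)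
  obtain ⟨u, hu⟩ := exists_re_mul_sub_neg_of_mem_closedBall hf hf' hq hr₀
    (mem_ball_zero_iff.1 hz₂) (z₀ := z₂) (by simp)
  simpa [h] using hu z₁ (by simpa using hle) hne

end UnitDisc

theorem norm_pFun_le_one {f : ℂ → ℂ} {z : ℂ}
    (h : (1 - ‖z‖ ^ 2) ^ 2 * ‖schwarzian f z‖ + 2 * ‖pFun f z‖ ^ 2 ≤ 2) : ‖pFun f z‖ ≤ 1 := by
  have : ‖pFun f z‖ ^ 2 ≤ 1 := by nlinarith [norm_nonneg (schwarzian f z)]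
  exact (sq_le_one_iff₀ (norm_nonneg _)).1 this

/-- If `f` is holomorphic with nonvanishing derivative on the unit disk and
`(1-|z|²)²|Sf(z)| + 2|p(z)|² ≤ 2` on the disk, then `f` is injective with convex image. -/
theorem kim_minda_inequality_implies_convex_mapping
    (f : ℂ → ℂ)
    (hf : DifferentiableOn ℂ f (ball (0 : ℂ) 1))
    (hf' : ∀ z ∈ ball (0 : ℂ) 1, deriv f z ≠ 0)
    (hineq : ∀ z ∈ ball (0 : ℂ) 1,
      (1 - ‖z‖ ^ 2) ^ 2 * ‖schwarzian f z‖ +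
        2 * ‖pFun f z‖ ^ 2 ≤ 2) :
    InjOn f (ball (0 : ℂ) 1) ∧ Convex ℝ (f '' ball (0 : ℂ) 1) := by
  have hq : ∀ z ∈ ball (0 : ℂ) 1, 0 < (convexityFunctional f z).re := fun z hz =>
    Complex.re_one_add_mul_pos_of_norm_conj_sub_le_one (mem_ball_zero_iff.1 hz)
      (norm_pFun_le_one (hineq z hz))
  exact ⟨injOn_of_re_convexityFunctional_pos hf hf' hq,
    convex_image_ball_one_of_re_convexityFunctional_pos hf hf' hq⟩
end

section
/- Let F(z) = log((1 + z)/(1 − z)) on the unit disk 𝔻 = {z ∈ ℂ : |z| < 1}, taking the principal branch of the logarithm (a conformal map of 𝔻 onto the parallel strip {w : |Im w| < π/2}). Then equality holds everywhere in the convexity inequality: for all z ∈ 𝔻, Re(1 + z·F''(z)/F'(z)) = (1/4)(1 − |z|²)·(2|SF(z)| + |F''(z)/F'(z)|²), where SF(z) = 2/(1 − z²)². -/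
/-!
Since `F' = 2/(1 - z²)` on the disk, `F''/F' = 2z/(1 - z²)` and `SF = 2/(1 - z²)²` are
rational in `z`. Both sides of the identity then equal `(1 - ‖z‖⁴)/‖1 - z²‖²`: the left one
because `Re((1 + w)/(1 - w)) = (1 - ‖w‖²)/‖1 - w‖²`, applied to `w = z²`.
-/

open Complex Metric Set

open Filter Topology

local notation "F" => fun w : ℂ => Complex.log ((1 + w) / (1 - w))

lemma one_sub_ne_zero_of_norm_lt_one {z : ℂ} (hz : ‖z‖ < 1) : 1 - z ≠ 0 :=
  sub_ne_zero.2 fun h => by simp [← h] at hz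

lemma one_sub_sq_ne_zero_of_norm_lt_one {z : ℂ} (hz : ‖z‖ < 1) : 1 - z ^ 2 ≠ 0 :=
  one_sub_ne_zero_of_norm_lt_one <| by
    simpa [norm_pow] using pow_lt_one₀ (norm_nonneg z) hz two_ne_zero

lemma re_one_add_div_one_sub (z : ℂ) :
    ((1 + z) / (1 - z)).re = (1 - ‖z‖ ^ 2) / ‖1 - z‖ ^ 2 := by
  rw [div_re, ← add_div, ← normSq_eq_norm_sq, ← normSq_eq_norm_sq]
  congr 1
  simp only [normSq_apply, add_re, sub_re, add_im, sub_im, one_re, one_im]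
  ring

lemma one_add_div_one_sub_mem_slitPlane {z : ℂ} (hz : ‖z‖ < 1) :
    (1 + z) / (1 - z) ∈ slitPlane := by
  refine mem_slitPlane_iff.2 (Or.inl ?_)
  rw [re_one_add_div_one_sub]
  have hz2 : ‖z‖ ^ 2 < 1 := pow_lt_one₀ (norm_nonneg z) hz two_ne_zero
  have hden : 0 < ‖1 - z‖ := norm_pos_iff.2 (one_sub_ne_zero_of_norm_lt_one hz)
  exact div_pos (by linarith) (pow_pos hden 2)

lemma hasDerivAt_log_one_add_div_one_sub {z : ℂ} (hz : ‖z‖ < 1) :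
    HasDerivAt F (2 / (1 - z ^ 2)) z := by
  have h₁ := one_sub_ne_zero_of_norm_lt_one hz
  have h₂ := one_sub_sq_ne_zero_of_norm_lt_one hz
  have hq : HasDerivAt (fun w : ℂ => (1 + w) / (1 - w)) (2 / (1 - z) ^ 2) z := by
    refine (((hasDerivAt_id' z).const_add 1).fun_div ((hasDerivAt_id' z).const_sub 1)
      h₁).congr_deriv ?_
    ring
  have h₃ : 1 + z ≠ 0 := by
    simpa using one_sub_ne_zero_of_norm_lt_one (z := -z) (by simpa using hz)
  refine (hq.clog (one_add_div_one_sub_mem_slitPlane hz)).congr_deriv ?_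
  field_simp
  ring

lemma hasDerivAt_two_div_one_sub_sq {z : ℂ} (hz : 1 - z ^ 2 ≠ 0) :
    HasDerivAt (fun w : ℂ => 2 / (1 - w ^ 2)) (4 * z / (1 - z ^ 2) ^ 2) z := by
  refine ((hasDerivAt_const z (2 : ℂ)).fun_div ((hasDerivAt_pow 2 z).const_sub 1)
    hz).congr_deriv ?_
  ring

lemma hasDerivAt_two_mul_div_one_sub_sq {z : ℂ} (hz : 1 - z ^ 2 ≠ 0) :
    HasDerivAt (fun w : ℂ => 2 * w / (1 - w ^ 2)) ((2 + 2 * z ^ 2) / (1 - z ^ 2) ^ 2) z := by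
  refine (((hasDerivAt_id' z).const_mul 2).fun_div ((hasDerivAt_pow 2 z).const_sub 1)
    hz).congr_deriv ?_
  ring

lemma deriv_log_one_add_div_one_sub_eventuallyEq {z : ℂ} (hz : ‖z‖ < 1) :
    deriv F =ᶠ[𝓝 z] fun w => 2 / (1 - w ^ 2) := by
  filter_upwards [isOpen_ball.mem_nhds (mem_ball_zero_iff.2 hz)] with w hw
  exact (hasDerivAt_log_one_add_div_one_sub (mem_ball_zero_iff.1 hw)).deriv

lemma deriv_deriv_div_deriv_log_one_add_div_one_sub {z : ℂ} (hz : ‖z‖ < 1) :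
    deriv (deriv F) z / deriv F z = 2 * z / (1 - z ^ 2) := by
  have h₂ := one_sub_sq_ne_zero_of_norm_lt_one hz
  rw [(deriv_log_one_add_div_one_sub_eventuallyEq hz).deriv_eq,
    (hasDerivAt_two_div_one_sub_sq h₂).deriv, (hasDerivAt_log_one_add_div_one_sub hz).deriv]
  field_simp
  ring

lemma schwarzian_log_one_add_div_one_sub {z : ℂ} (hz : ‖z‖ < 1) :
    schwarzian F z = 2 / (1 - z ^ 2) ^ 2 := by
  have h₂ := one_sub_sq_ne_zero_of_norm_lt_one hz
  have hpre :
      (fun w => deriv (deriv F) w / deriv F w) =ᶠ[𝓝 z] fun w => 2 * w / (1 - w ^ 2) := by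
    filter_upwards [isOpen_ball.mem_nhds (mem_ball_zero_iff.2 hz)] with w hw
    exact deriv_deriv_div_deriv_log_one_add_div_one_sub (mem_ball_zero_iff.1 hw)
  rw [schwarzian, hpre.deriv_eq, (hasDerivAt_two_mul_div_one_sub_sq h₂).deriv,
    deriv_deriv_div_deriv_log_one_add_div_one_sub hz]
  field_simp
  ring

/-- For the strip mapping `F(z) = log((1+z)/(1-z))` (principal branch), the Schwarzian
is `SF(z) = 2/(1-z²)²` and equality holds everywhere in the convexity inequality
`Re(1 + z F''/F') = (1/4)(1-|z|²)(2|SF| + |F''/F'|²)`. -/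
theorem strip_map_equality :
    ∀ z ∈ ball (0 : ℂ) 1,
      schwarzian (fun w : ℂ => Complex.log ((1 + w) / (1 - w))) z = 2 / (1 - z ^ 2) ^ 2 ∧
      (1 + z * (deriv (deriv (fun w : ℂ => Complex.log ((1 + w) / (1 - w)))) z /
          deriv (fun w : ℂ => Complex.log ((1 + w) / (1 - w))) z)).re =
        (1 / 4) * (1 - ‖z‖ ^ 2) *
          (2 * ‖schwarzian (fun w : ℂ => Complex.log ((1 + w) / (1 - w))) z‖ +
            ‖deriv (deriv (fun w : ℂ => Complex.log ((1 + w) / (1 - w)))) z /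
              deriv (fun w : ℂ => Complex.log ((1 + w) / (1 - w))) z‖ ^ 2) := by
  intro z hz
  rw [mem_ball_zero_iff] at hz
  have h₂ := one_sub_sq_ne_zero_of_norm_lt_one hz
  rw [schwarzian_log_one_add_div_one_sub hz, deriv_deriv_div_deriv_log_one_add_div_one_sub hz]
  refine ⟨rfl, ?_⟩
  have hlhs : 1 + z * (2 * z / (1 - z ^ 2)) = (1 + z ^ 2) / (1 - z ^ 2) := by
    field_simp
    ring
  have hden : 0 < ‖1 - z ^ 2‖ := norm_pos_iff.2 h₂
  rw [hlhs, re_one_add_div_one_sub, norm_div, norm_div, norm_mul, norm_pow, norm_pow]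
  simp only [Complex.norm_ofNat]
  field_simp
  ring
end
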